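/- Let n ≥ 2r with r ≥ 2, and let 𝒜 ⊆ ([n] choose r) be an MLCIF of rank 2. Then either 𝒜 = AHM_3, or there exists an integer j with 2 ≤ j ≤ r+1 such that the generators of 𝒜 of size two are precisely the sets {1,2}, {1,3}, ..., {1,j} (i.e. 𝒜 ∈ I_j). -/

import Mathlib

open Finset

/-- The family of all `r`-element subsets of `[n] = {1, …, n}`. -/
def chooseFam (n r : ℕ) : Finset (Finset ℕ) := (Finset.Icc 1 n).powersetCard r

/-- A family of sets is intersecting if any two members meet. -/
def IntersectingFam (𝒜 : Finset (Finset ℕ)) : Prop :=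
  ∀ A ∈ 𝒜, ∀ B ∈ 𝒜, (A ∩ B).Nonempty

/-- `DomLE B A` : writing the elements in increasing order, the `i`-th element
of `B` is at most the `i`-th element of `A` (and they have the same size). -/
def DomLE (B A : Finset ℕ) : Prop :=
  B.card = A.card ∧
  ∀ (i : ℕ) (hB : i < (B.sort (· ≤ ·)).length) (hA : i < (A.sort (· ≤ ·)).length),
    (B.sort (· ≤ ·)).get ⟨i, hB⟩ ≤ (A.sort (· ≤ ·)).get ⟨i, hA⟩

/-- A family of `r`-subsets of `[n]` is left-compressed if it is downward closed
under the domination order. -/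
def LeftCompressed (n r : ℕ) (𝒜 : Finset (Finset ℕ)) : Prop :=
  ∀ A ∈ 𝒜, ∀ B ∈ chooseFam n r, DomLE B A → B ∈ 𝒜

/-- A left-compressed intersecting family in `([n] choose r)`. -/
def IsLCIF (n r : ℕ) (𝒜 : Finset (Finset ℕ)) : Prop :=
  𝒜 ⊆ chooseFam n r ∧ IntersectingFam 𝒜 ∧ LeftCompressed n r 𝒜

/-- A maximal left-compressed intersecting family. -/
def IsMLCIF (n r : ℕ) (𝒜 : Finset (Finset ℕ)) : Prop :=
  IsLCIF n r 𝒜 ∧ ∀ ℬ : Finset (Finset ℕ), IsLCIF n r ℬ → 𝒜 ⊆ ℬ → ℬ = 𝒜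

/-- The number of members of `𝒜` hitting `X`. -/
def hit (X : Finset ℕ) (𝒜 : Finset (Finset ℕ)) : ℕ :=
  (𝒜.filter fun A => (A ∩ X).Nonempty).card

/-- An MLCIF optimal for `X`: it maximises `hit X` among all MLCIFs. -/
def OptimalMLCIF (n r : ℕ) (X : Finset ℕ) (𝒜 : Finset (Finset ℕ)) : Prop :=
  IsMLCIF n r 𝒜 ∧ ∀ ℬ : Finset (Finset ℕ), IsMLCIF n r ℬ → hit X ℬ ≤ hit X 𝒜

/-- An LCIF optimal for `X` among all LCIFs. -/
def OptimalLCIF (n r : ℕ) (X : Finset ℕ) (𝒜 : Finset (Finset ℕ)) : Prop :=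
  IsLCIF n r 𝒜 ∧ ∀ ℬ : Finset (Finset ℕ), IsLCIF n r ℬ → hit X ℬ ≤ hit X 𝒜

/-- The `t`-adjusted Hilton–Milner family. -/
def AHM (n r t : ℕ) : Finset (Finset ℕ) :=
  (chooseFam n r).filter fun A =>
    (1 ∈ A ∧ (A ∩ Finset.Icc 2 t).Nonempty) ∨ Finset.Icc 2 t ⊆ A

/-- The star: all `r`-subsets of `[n]` containing `1`. -/
def starFam (n r : ℕ) : Finset (Finset ℕ) :=
  (chooseFam n r).filter fun A => 1 ∈ A

/-- `G ⊆ [n]` is a potential generator of `𝒜`: every `A ∈ ([n] choose r)`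
containing `G` lies in `𝒜`. -/
def PotGen (n r : ℕ) (𝒜 : Finset (Finset ℕ)) (G : Finset ℕ) : Prop :=
  G ⊆ Finset.Icc 1 n ∧ ∀ A ∈ chooseFam n r, G ⊆ A → A ∈ 𝒜

open Classical in
/-- The canonical generating family: all inclusion-minimal potential generators. -/
noncomputable def canonGen (n r : ℕ) (𝒜 : Finset (Finset ℕ)) : Finset (Finset ℕ) :=
  (Finset.Icc 1 n).powerset.filter fun G =>
    PotGen n r 𝒜 G ∧ ∀ G' ⊆ G, PotGen n r 𝒜 G' → G' = G

/-- The rank of `𝒜`: the smallest size of a generator. -/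
noncomputable def rankFam (n r : ℕ) (𝒜 : Finset (Finset ℕ)) : ℕ :=
  sInf {k : ℕ | ∃ G ∈ canonGen n r 𝒜, G.card = k}

/-- The family generated by `𝒢` with respect to `n` and `r`. -/
def genFam (n r : ℕ) (𝒢 : Finset (Finset ℕ)) : Finset (Finset ℕ) :=
  (chooseFam n r).filter fun A => ∃ G ∈ 𝒢, G ⊆ A

/-- `𝒜 ∈ I_j`: an MLCIF of rank two whose generators of size two are precisely
`{1,2}, {1,3}, …, {1,j}`. -/
noncomputable def MemI (n r j : ℕ) (𝒜 : Finset (Finset ℕ)) : Prop :=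
  IsMLCIF n r 𝒜 ∧ rankFam n r 𝒜 = 2 ∧
    (canonGen n r 𝒜).filter (fun G => G.card = 2) =
      (Finset.Icc 2 j).image fun i => ({1, i} : Finset ℕ)

/-!
A two-element potential generator `{a, b}` of a left-compressed family can be pushed down to
any `{c, d}` with `c ≤ a`, `d ≤ b`, and since `n ≥ 2r` every member of an intersecting family
meets every potential generator of size at most `r`. If `{2, 3}` is a potential generator, so
are `{1, 2}` and `{1, 3}`; a member meeting all three pairs contains two of `1, 2, 3`, which is
exactly `AHM_3`. Otherwise every two-element generator has the form `{1, i}`, the admissible `i`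
form an interval `[2, j]`, and `j ≤ r + 1`: by maximality `𝒜` is not contained in the star of `1`,
so by compression it contains `[2, r + 1]`, which has to meet `{1, j}`.
-/

theorem Finset.sort_get_le_iff_lt_card_filter {α : Type*} [LinearOrder α] (s : Finset α)
    (m : α) {i : ℕ} (hi : i < (s.sort (· ≤ ·)).length) :
    (s.sort (· ≤ ·)).get ⟨i, hi⟩ ≤ m ↔ i < #{x ∈ s | x ≤ m} := by
  set l := s.sort (· ≤ ·)
  have hsorted : l.Pairwise (· ≤ ·) := s.pairwise_sort _
  have hcard_take : ∀ k, #(l.take k).toFinset = min k l.length := fun k => by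
    rw [List.toFinset_card_of_nodup ((List.take_sublist _ _).nodup (s.sort_nodup _)),
      List.length_take]
  constructor
  · intro hle
    have hsub : (l.take (i + 1)).toFinset ⊆ {x ∈ s | x ≤ m} := by
      intro x hx
      obtain ⟨j, hj, rfl⟩ := List.mem_take_iff_getElem.1 (List.mem_toFinset.1 hx)
      refine mem_filter.2 ⟨(s.mem_sort _).1 (List.getElem_mem _), le_trans ?_ hle⟩
      exact hsorted.rel_get_of_le (a := ⟨j, by omega⟩) (b := ⟨i, hi⟩) (by simp; omega)
    have := card_le_card hsub
    rw [hcard_take] at this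
    omega
  · intro hlt
    by_contra! hgt
    have hsub : {x ∈ s | x ≤ m} ⊆ (l.take i).toFinset := by
      intro x hx
      rw [mem_filter] at hx
      obtain ⟨⟨j, hj⟩, rfl⟩ := List.mem_iff_get.1 ((mem_sort (α := α) (· ≤ ·)).2 hx.1)
      have hji : j < i := by
        by_contra! hij
        exact not_le.2 (hgt.trans_le
          (hsorted.rel_get_of_le (a := ⟨i, hi⟩) (b := ⟨j, hj⟩) hij)) hx.2
      exact List.mem_toFinset.2 (List.mem_take_iff_getElem.2 ⟨j, by omega, rfl⟩)
    have := card_le_card hsub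
    rw [hcard_take] at this
    omega

theorem domLE_iff {B A : Finset ℕ} :
    DomLE B A ↔ #B = #A ∧ ∀ k, #{x ∈ A | x ≤ k} ≤ #{x ∈ B | x ≤ k} := by
  refine ⟨fun ⟨hcard, hle⟩ => ⟨hcard, fun k => ?_⟩,
    fun ⟨hcard, hle⟩ => ⟨hcard, fun i hB hA => ?_⟩⟩
  · obtain h | hpos := Nat.eq_zero_or_pos #{x ∈ A | x ≤ k}
    · omega
    have hA : #{x ∈ A | x ≤ k} - 1 < (A.sort (· ≤ ·)).length := by
      have := card_filter_le A (· ≤ k)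
      rw [length_sort]
      omega
    have hB : #{x ∈ A | x ≤ k} - 1 < (B.sort (· ≤ ·)).length := by
      rw [length_sort] at hA ⊢
      omega
    have hAk := (A.sort_get_le_iff_lt_card_filter k hA).2 (by omega)
    have := (B.sort_get_le_iff_lt_card_filter k hB).1 ((hle _ hB hA).trans hAk)
    omega
  · rw [sort_get_le_iff_lt_card_filter]
    exact ((A.sort_get_le_iff_lt_card_filter _ hA).1 le_rfl).trans_le (hle _)

theorem DomLE.mem_of_forall_le {B A : Finset ℕ} {a : ℕ} (h : DomLE B A) (ha : a ∈ A)
    (hB : ∀ x ∈ B, a ≤ x) : a ∈ B := by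
  have hpos : 0 < #{x ∈ B | x ≤ a} :=
    (card_pos.2 ⟨a, mem_filter.2 ⟨ha, le_rfl⟩⟩ : 0 < #{x ∈ A | x ≤ a}).trans_le
      ((domLE_iff.1 h).2 a)
  obtain ⟨x, hx⟩ := card_pos.1 hpos
  rw [mem_filter] at hx
  exact le_antisymm hx.2 (hB x hx.1) ▸ hx.1

theorem domLE_insert_erase {A : Finset ℕ} {a c : ℕ} (hc : c ∈ A) (ha : a ∉ A) (hca : c ≤ a) :
    DomLE A (insert a (A.erase c)) := by
  have haE : a ∉ A.erase c := fun h => ha (mem_of_mem_erase h)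
  refine domLE_iff.2 ⟨by rw [card_insert_of_notMem haE, card_erase_add_one hc], fun k => ?_⟩
  conv_rhs => rw [← insert_erase hc]
  rw [filter_insert, filter_insert]
  by_cases hak : a ≤ k
  · rw [if_pos hak, if_pos (hca.trans hak), card_insert_of_notMem (by simp [haE]),
      card_insert_of_notMem (by simp)]
  · rw [if_neg hak]
    split_ifs
    exacts [card_le_card (subset_insert _ _), le_rfl]

theorem domLE_Ico {B : Finset ℕ} {a : ℕ} (hB : ∀ x ∈ B, a ≤ x) :
    DomLE (Ico a (a + #B)) B := by
  refine domLE_iff.2 ⟨by simp, fun k => ?_⟩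
  have hfilter : {x ∈ Ico a (a + #B) | x ≤ k} = Ico a (min (a + #B) (k + 1)) := by
    ext x
    simp only [mem_filter, mem_Ico, lt_min_iff]
    omega
  have hle : #{x ∈ B | x ≤ k} ≤ #(Ico a (k + 1)) :=
    card_le_card fun x hx => by
      rw [mem_filter] at hx
      exact mem_Ico.2 ⟨hB x hx.1, by omega⟩
  have := card_filter_le B (· ≤ k)
  rw [hfilter, Nat.card_Ico]
  rw [Nat.card_Ico] at hle
  omega

theorem mem_chooseFam {n r : ℕ} {A : Finset ℕ} :
    A ∈ chooseFam n r ↔ A ⊆ Icc 1 n ∧ #A = r :=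
  mem_powersetCard

section Families

variable {n r : ℕ} {𝒜 : Finset (Finset ℕ)}

theorem isLCIF_starFam : IsLCIF n r (starFam n r) := by
  refine ⟨filter_subset _ _, fun A hA B hB => ⟨1, mem_inter.2 ⟨(mem_filter.1 hA).2,
    (mem_filter.1 hB).2⟩⟩, fun A hA B hB hBA => mem_filter.2 ⟨hB, ?_⟩⟩
  exact hBA.mem_of_forall_le (mem_filter.1 hA).2
    fun x hx => (mem_Icc.1 ((mem_chooseFam.1 hB).1 hx)).1

theorem IsMLCIF.exists_one_notMem (hA : IsMLCIF n r 𝒜) (hn : 1 ≤ n)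
    (h1 : ¬ PotGen n r 𝒜 {1}) : ∃ B ∈ 𝒜, 1 ∉ B := by
  by_contra! h
  have hstar : starFam n r = 𝒜 :=
    hA.2 _ isLCIF_starFam fun A hA' => mem_filter.2 ⟨hA.1.1 hA', h A hA'⟩
  refine h1 ⟨by simpa using hn, fun A hA' h1A => ?_⟩
  exact hstar ▸ mem_filter.2 ⟨hA', singleton_subset_iff.1 h1A⟩

theorem PotGen.insert_of_le {G : Finset ℕ} {a c : ℕ} (hL : LeftCompressed n r 𝒜)
    (hg : PotGen n r 𝒜 (insert a G)) (hc : 1 ≤ c) (hca : c ≤ a) (hcG : c ∉ G) :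
    PotGen n r 𝒜 (insert c G) := by
  have ha : a ∈ Icc 1 n := hg.1 (mem_insert_self a G)
  refine ⟨insert_subset (mem_Icc.2 ⟨hc, hca.trans (mem_Icc.1 ha).2⟩)
    ((subset_insert a G).trans hg.1), fun A hA hGA => ?_⟩
  rw [insert_subset_iff] at hGA
  by_cases haA : a ∈ A
  · exact hg.2 A hA (insert_subset haA hGA.2)
  have hdom := domLE_insert_erase hGA.1 haA hca
  have hA' : insert a (A.erase c) ∈ chooseFam n r := by
    rw [mem_chooseFam] at hA ⊢
    exact ⟨insert_subset ha ((erase_subset c A).trans hA.1), hdom.1.symm.trans hA.2⟩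
  exact hL _ (hg.2 _ hA' (insert_subset_insert a (subset_erase.2 ⟨hGA.2, hcG⟩))) A hA hdom

theorem PotGen.pair_of_le {a b c d : ℕ} (hL : LeftCompressed n r 𝒜)
    (hg : PotGen n r 𝒜 {a, b}) (hc : 1 ≤ c) (hca : c ≤ a) (hcd : c < d) (hdb : d ≤ b) :
    PotGen n r 𝒜 {c, d} := by
  have hcb : PotGen n r 𝒜 {c, b} := hg.insert_of_le hL hc hca (by simp; omega)
  rw [pair_comm] at hcb ⊢
  exact hcb.insert_of_le hL (by omega) hdb (by simp; omega)

theorem PotGen.inter_nonempty {G A : Finset ℕ} (hsub : 𝒜 ⊆ chooseFam n r)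
    (hint : IntersectingFam 𝒜) (hn : 2 * r ≤ n) (hg : PotGen n r 𝒜 G) (hG : #G ≤ r)
    (hA : A ∈ 𝒜) : (A ∩ G).Nonempty := by
  by_contra hdisj
  rw [not_nonempty_iff_eq_empty, ← disjoint_iff_inter_eq_empty] at hdisj
  have hAn := mem_chooseFam.1 (hsub hA)
  have hGA : G ⊆ Icc 1 n \ A := subset_sdiff.2 ⟨hg.1, hdisj.symm⟩
  obtain ⟨B, hGB, hBA, hB⟩ := exists_subsuperset_card_eq hGA hG
    (by rw [card_sdiff_of_subset hAn.1, Nat.card_Icc]; omega)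
  have hB𝒜 : B ∈ 𝒜 := hg.2 B (mem_chooseFam.2 ⟨hBA.trans sdiff_subset, hB⟩) hGB
  obtain ⟨x, hx⟩ := hint A hA B hB𝒜
  rw [mem_inter] at hx
  exact (mem_sdiff.1 (hBA hx.2)).2 hx.1

theorem mem_canonGen {G : Finset ℕ} :
    G ∈ canonGen n r 𝒜 ↔ PotGen n r 𝒜 G ∧ ∀ G' ⊆ G, PotGen n r 𝒜 G' → G' = G := by
  classical
  rw [canonGen, mem_filter, mem_powerset]
  exact ⟨And.right, fun h => ⟨h.1.1, h⟩⟩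

theorem PotGen.exists_mem_canonGen_subset {G : Finset ℕ} (hg : PotGen n r 𝒜 G) :
    ∃ G' ∈ canonGen n r 𝒜, G' ⊆ G := by
  classical
  obtain ⟨G', hG', hmin⟩ := exists_min_image {H ∈ G.powerset | PotGen n r 𝒜 H} card
    ⟨G, mem_filter.2 ⟨mem_powerset_self G, hg⟩⟩
  rw [mem_filter, mem_powerset] at hG'
  refine ⟨G', mem_canonGen.2 ⟨hG'.2, fun H hH hgH => ?_⟩, hG'.1⟩
  exact eq_of_subset_of_card_le hH
    (hmin H (mem_filter.2 ⟨mem_powerset.2 (hH.trans hG'.1), hgH⟩))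

theorem rankFam_le_card {G : Finset ℕ} (hg : PotGen n r 𝒜 G) : rankFam n r 𝒜 ≤ #G := by
  obtain ⟨G', hG', hsub⟩ := hg.exists_mem_canonGen_subset
  have hrank : rankFam n r 𝒜 ≤ #G' := Nat.sInf_le ⟨G', hG', rfl⟩
  exact hrank.trans (card_le_card hsub)

theorem mem_canonGen_of_card_le_rankFam {G : Finset ℕ} (hg : PotGen n r 𝒜 G)
    (hG : #G ≤ rankFam n r 𝒜) : G ∈ canonGen n r 𝒜 :=
  mem_canonGen.2 ⟨hg, fun _ hsub hg' =>
    eq_of_subset_of_card_le hsub (hG.trans (rankFam_le_card hg'))⟩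

theorem exists_mem_canonGen_card_eq_rankFam (h : rankFam n r 𝒜 ≠ 0) :
    ∃ G ∈ canonGen n r 𝒜, #G = rankFam n r 𝒜 := by
  have hne : {k | ∃ G ∈ canonGen n r 𝒜, #G = k}.Nonempty :=
    Set.nonempty_iff_ne_empty.2 fun hempty => h (by rw [rankFam, hempty, Nat.sInf_empty])
  exact Nat.sInf_mem hne

theorem eq_AHM_three_of_potGen_two_three (hL : IsLCIF n r 𝒜) (hr : 2 ≤ r) (hn : 2 * r ≤ n)
    (h23 : PotGen n r 𝒜 {2, 3}) : 𝒜 = AHM n r 3 := by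
  have h12 : PotGen n r 𝒜 {1, 2} :=
    h23.pair_of_le hL.2.2 le_rfl (by norm_num) one_lt_two (by norm_num)
  have h13 : PotGen n r 𝒜 {1, 3} :=
    h23.pair_of_le hL.2.2 le_rfl (by norm_num) (by norm_num) le_rfl
  have hmeets : ∀ {a b : ℕ}, PotGen n r 𝒜 {a, b} → ∀ A ∈ 𝒜, a ∈ A ∨ b ∈ A := fun hg A hA => by
    obtain ⟨x, hx⟩ := hg.inter_nonempty hL.1 hL.2.1 hn (card_le_two.trans hr) hA
    rw [mem_inter, mem_insert, mem_singleton] at hx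
    rcases hx with ⟨hxA, rfl | rfl⟩ <;> simp [hxA]
  have hIcc : Icc 2 3 = ({2, 3} : Finset ℕ) := by decide
  ext A
  simp only [AHM, mem_filter, hIcc]
  constructor
  · intro hA
    have h₁₂ := hmeets h12 A hA
    have h₁₃ := hmeets h13 A hA
    have h₂₃ := hmeets h23 A hA
    refine ⟨hL.1 hA, ?_⟩
    by_cases h1 : 1 ∈ A
    · exact Or.inl ⟨h1, h₂₃.elim (fun h => ⟨2, by simp [h]⟩) fun h => ⟨3, by simp [h]⟩⟩
    · exact Or.inr (by simp [insert_subset_iff, h₁₂.resolve_left h1, h₁₃.resolve_left h1])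
  · rintro ⟨hAn, ⟨h1, x, hx⟩ | hsub⟩
    · simp only [mem_inter, mem_insert, mem_singleton] at hx
      obtain ⟨hxA, rfl | rfl⟩ := hx
      exacts [h12.2 A hAn (by simp [insert_subset_iff, h1, hxA]),
        h13.2 A hAn (by simp [insert_subset_iff, h1, hxA])]
    · exact h23.2 A hAn hsub

theorem IsMLCIF.le_succ_of_potGen_pair_one (hA : IsMLCIF n r 𝒜) (hr : 2 ≤ r) (hn : 2 * r ≤ n)
    (h1 : ¬ PotGen n r 𝒜 {1}) {i : ℕ} (hi : PotGen n r 𝒜 {1, i}) : i ≤ r + 1 := by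
  obtain ⟨B, hB, h1B⟩ := hA.exists_one_notMem (by omega) h1
  have hBn := mem_chooseFam.1 (hA.1.1 hB)
  have hB2 : ∀ x ∈ B, 2 ≤ x := fun x hx => by
    have := mem_Icc.1 (hBn.1 hx)
    have : x ≠ 1 := by rintro rfl; exact h1B hx
    omega
  have hIco : Ico 2 (2 + r) ∈ 𝒜 := by
    refine hA.1.2.2 B hB _ (mem_chooseFam.2 ⟨fun x hx => ?_, by simp⟩) (hBn.2 ▸ domLE_Ico hB2)
    rw [mem_Ico] at hx
    exact mem_Icc.2 ⟨by omega, by omega⟩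
  obtain ⟨x, hx⟩ := hi.inter_nonempty hA.1.1 hA.1.2.1 hn (card_le_two.trans hr) hIco
  simp only [mem_inter, mem_Ico, mem_insert, mem_singleton] at hx
  omega

theorem exists_eq_pair_one (hL : LeftCompressed n r 𝒜) (h23 : ¬ PotGen n r 𝒜 {2, 3})
    {G : Finset ℕ} (hg : PotGen n r 𝒜 G) (hG : #G = 2) : ∃ i, 1 < i ∧ G = {1, i} := by
  obtain ⟨x, y, hxy, rfl⟩ := card_eq_two.1 hG
  have hx := (mem_Icc.1 (hg.1 (mem_insert_self x {y}))).1
  have hy := (mem_Icc.1 (hg.1 (mem_insert_of_mem (mem_singleton_self y)))).1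
  by_cases hx1 : x = 1
  · exact ⟨y, by omega, hx1 ▸ rfl⟩
  by_cases hy1 : y = 1
  · exact ⟨x, by omega, hy1 ▸ pair_comm x 1⟩
  exfalso
  rcases lt_or_gt_of_ne hxy with hlt | hlt
  · exact h23 (hg.pair_of_le hL (by norm_num) (by omega) (by norm_num) (by omega))
  · rw [pair_comm] at hg
    exact h23 (hg.pair_of_le hL (by norm_num) (by omega) (by norm_num) (by omega))

theorem filter_canonGen_card_eq_two (hL : LeftCompressed n r 𝒜) (hrank : rankFam n r 𝒜 = 2)
    (h23 : ¬ PotGen n r 𝒜 {2, 3}) {j : ℕ} (hj : PotGen n r 𝒜 {1, j})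
    (hmax : ∀ i, PotGen n r 𝒜 {1, i} → i ≤ j) :
    (canonGen n r 𝒜).filter (fun G => G.card = 2) = (Icc 2 j).image fun i => {1, i} := by
  ext G
  simp only [mem_filter, mem_image, mem_Icc]
  constructor
  · rintro ⟨hG, hG2⟩
    have hGpot := (mem_canonGen.1 hG).1
    obtain ⟨i, hi, rfl⟩ := exists_eq_pair_one hL h23 hGpot hG2
    exact ⟨i, ⟨hi, hmax i hGpot⟩, rfl⟩
  · rintro ⟨i, ⟨h2i, hij⟩, rfl⟩
    have hipot := hj.pair_of_le hL le_rfl le_rfl (by omega) hij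
    have hcard : #{1, i} = 2 := card_pair (by omega)
    exact ⟨mem_canonGen_of_card_le_rankFam hipot (by omega), hcard⟩

end Families

/-- For `n ≥ 2r`, `r ≥ 2`, every MLCIF `𝒜` of rank 2 satisfies
either `𝒜 = AHM_3` or `𝒜 ∈ I_j` for some `2 ≤ j ≤ r + 1`. -/
theorem stmt13 (n r : ℕ) (hr : 2 ≤ r) (hn : 2 * r ≤ n) (𝒜 : Finset (Finset ℕ))
    (hA : IsMLCIF n r 𝒜) (hrank : rankFam n r 𝒜 = 2) :
    𝒜 = AHM n r 3 ∨ ∃ j : ℕ, 2 ≤ j ∧ j ≤ r + 1 ∧ MemI n r j 𝒜 := by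
  classical
  by_cases h23 : PotGen n r 𝒜 {2, 3}
  · exact Or.inl (eq_AHM_three_of_potGen_two_three hA.1 hr hn h23)
  have h1 : ¬ PotGen n r 𝒜 {1} := fun h => by simpa [hrank] using rankFam_le_card h
  have hbound : ∀ {i}, PotGen n r 𝒜 {1, i} → i ≤ r + 1 :=
    hA.le_succ_of_potGen_pair_one hr hn h1
  obtain ⟨G, hG, hG2⟩ := exists_mem_canonGen_card_eq_rankFam (hrank ▸ two_ne_zero)
  have hGpot := (mem_canonGen.1 hG).1
  obtain ⟨i₀, hi₀, rfl⟩ := exists_eq_pair_one hA.1.2.2 h23 hGpot (hG2.trans hrank)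
  set j := Nat.findGreatest (fun i => PotGen n r 𝒜 {1, i}) (r + 1)
  have hj : PotGen n r 𝒜 {1, j} :=
    Nat.findGreatest_spec (P := fun i => PotGen n r 𝒜 {1, i}) (hbound hGpot) hGpot
  have hmax : ∀ i, PotGen n r 𝒜 {1, i} → i ≤ j := fun i hi => Nat.le_findGreatest (hbound hi) hi
  exact Or.inr ⟨j, hi₀.trans_le (hmax i₀ hGpot), Nat.findGreatest_le _, hA, hrank,
    filter_canonGen_card_eq_two hA.1.2.2 hrank h23 hj hmax⟩
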